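/- Let a be an integer and q a positive integer with gcd(a,q)=1. There exists a real number α = α(a,q), not depending on k, such that for every integer k, conj(G(a,k,q)) = √q · e^{iα} · c_{a/q}(k). -/

import Mathlib

noncomputable def e (x : ℝ) : ℂ := Complex.exp (2 * Real.pi * Complex.I * x)

noncomputable def G (a k : ℤ) (q : ℕ) : ℂ :=
  ∑ ℓ ∈ Finset.range q, e (((a * ℓ ^ 2 + k * ℓ : ℤ) : ℝ) / q)

noncomputable def invMod (a : ℤ) (q : ℕ) : ℕ := ZMod.val ((a : ZMod q)⁻¹)

noncomputable def cc (a : ℤ) (q : ℕ) (k : ℤ) : ℂ :=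
  if Odd q then e ((invMod (4 * a) q : ℝ) * (k : ℝ) ^ 2 / q)
  else if Even (k + (q : ℤ) / 2) then
    (Real.sqrt 2 : ℂ) * e ((invMod a q : ℝ) * (k : ℝ) ^ 2 / (4 * q))
  else 0

/-!
Write `S(a, k) = ∑_{x mod q} e((a x² + k x)/q)`. Completing the square, the shift `x ↦ x + t`
gives `S(a, k + 2at) = e(-(at² + kt)/q) S(a, k)`, and expanding `|S(a, k)|²` with `x = y + d`
and summing the character over `y` leaves `q ∑_{2ad = 0} e((ad² + kd)/q)`.

For odd `q`, `k = 2at` with `t = 2·\overline{4a}·k`, so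
`conj S(a, k) = e(\overline{4a}k²/q) conj S(a, 0)`, and `|S(a, 0)|² = q`. For `q = 2r`, the
solutions of `2d = 0` are `d = 0, r`, so `|S(a, k)|² = q (1 + (-1)^(k+r))` because `a` is odd.
Hence `S(a, k) = 0` when `k + r` is odd; otherwise `k = r + 2w ≡ r + 2a(āw) (mod q)`, which
relates `S(a, k)` to `S(a, r)`, of modulus `√(2q)`, and the phase `(at² + rt)/q` with `t = āw`
differs from `ā(k² - r²)/(4q)` by an integer.
-/

open Finset ZMod

lemma e_add (x y : ℝ) : e (x + y) = e x * e y := by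
  rw [e, e, e, ← Complex.exp_add]; push_cast; ring_nf

lemma e_intCast (n : ℤ) : e n = 1 := by
  rw [e, ← Complex.exp_int_mul_two_pi_mul_I n]; push_cast; ring_nf

lemma e_add_intCast (x : ℝ) (n : ℤ) : e (x + n) = e x := by
  rw [e_add, e_intCast, mul_one]

lemma norm_e (x : ℝ) : ‖e x‖ = 1 := by
  rw [e, Complex.norm_exp]; simp

lemma e_intCast_div (q : ℕ) [NeZero q] (n : ℤ) : e (n / q) = stdAddChar (n : ZMod q) := by
  rw [e, stdAddChar_coe]; push_cast; ring_nf

lemma conj_stdAddChar {q : ℕ} [NeZero q] (x : ZMod q) :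
    starRingEnd ℂ (stdAddChar x) = stdAddChar (-x) := by
  rw [stdAddChar_apply, stdAddChar_apply, AddChar.map_neg_eq_inv, Circle.coe_inv_eq_conj]

lemma stdAddChar_natCast_mul_intCast (r : ℕ) [NeZero r] (m : ℤ) :
    stdAddChar ((r : ZMod (2 * r)) * (m : ZMod (2 * r))) = if Even m then 1 else -1 := by
  have hr : (r : ℂ) ≠ 0 := Nat.cast_ne_zero.mpr (NeZero.ne r)
  have h : stdAddChar (r : ZMod (2 * r)) = -1 := by
    have := stdAddChar_coe (N := 2 * r) r
    rw [Int.cast_natCast] at this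
    rw [this, ← Complex.exp_pi_mul_I]; push_cast
    congr 1; field_simp
  rw [mul_comm (r : ZMod (2 * r)), ← zsmul_eq_mul, AddChar.map_zsmul_eq_zpow, h]
  split_ifs with hm
  · exact hm.neg_one_zpow
  · exact (Int.not_even_iff_odd.mp hm).neg_one_zpow

lemma norm_eq_sqrt_of_mul_conj_eq {z : ℂ} {x : ℝ} (h : z * starRingEnd ℂ z = x) :
    ‖z‖ = √x := by
  rw [Complex.mul_conj] at h
  rw [Complex.norm_def, (by exact_mod_cast h : Complex.normSq z = x)]

noncomputable def quadGaussSum (q : ℕ) [NeZero q] (a k : ZMod q) : ℂ :=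
  ∑ x : ZMod q, stdAddChar (a * x ^ 2 + k * x)

section quadGaussSum

variable {q : ℕ} [NeZero q]

lemma G_eq_quadGaussSum (a k : ℤ) : G a k q = quadGaussSum q a k := by
  refine Finset.sum_nbij' (fun ℓ ↦ (ℓ : ZMod q)) (fun x ↦ x.val) (fun _ _ ↦ mem_univ _)
    (fun x _ ↦ mem_range.mpr x.val_lt) (fun ℓ hℓ ↦ val_cast_of_lt (mem_range.mp hℓ))
    (fun x _ ↦ natCast_zmod_val x) (fun ℓ _ ↦ ?_)
  rw [e_intCast_div]; push_cast; rfl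

lemma quadGaussSum_add_two_mul (a k t : ZMod q) :
    quadGaussSum q a (k + 2 * a * t) =
      stdAddChar (-(a * t ^ 2 + k * t)) * quadGaussSum q a k := by
  rw [quadGaussSum, quadGaussSum, mul_sum]
  refine Fintype.sum_equiv (Equiv.addRight t) _ _ fun x ↦ ?_
  rw [← AddChar.map_add_eq_mul, Equiv.coe_addRight]
  ring_nf

lemma quadGaussSum_mul_conj (a k : ZMod q) :
    quadGaussSum q a k * starRingEnd ℂ (quadGaussSum q a k) =
      q * ∑ d with 2 * a * d = 0, stdAddChar (a * d ^ 2 + k * d) := by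
  have hsum (y : ZMod q) :
      ∑ x, stdAddChar (a * x ^ 2 + k * x) * stdAddChar (-(a * y ^ 2 + k * y)) =
      ∑ d, stdAddChar (a * d ^ 2 + k * d) * stdAddChar (y * (2 * a * d)) := by
    refine (Fintype.sum_equiv (Equiv.addRight y) _ _ fun d ↦ ?_).symm
    rw [← AddChar.map_add_eq_mul, ← AddChar.map_add_eq_mul, Equiv.coe_addRight]
    ring_nf
  simp only [quadGaussSum, map_sum, conj_stdAddChar, sum_mul_sum]
  rw [sum_comm, sum_congr rfl fun y _ ↦ hsum y, sum_comm, sum_filter, mul_sum]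
  refine sum_congr rfl fun d _ ↦ ?_
  rw [← mul_sum, AddChar.sum_mulShift _ (isPrimitive_stdAddChar q), ZMod.card]
  split_ifs <;> simp [mul_comm]

end quadGaussSum

lemma e_invMod_mul_div (q : ℕ) [NeZero q] (a k : ℤ) :
    e (invMod a q * k ^ 2 / q) = stdAddChar ((a : ZMod q)⁻¹ * (k : ZMod q) ^ 2) := by
  have h := e_intCast_div q (invMod a q * k ^ 2)
  push_cast [invMod, natCast_zmod_val] at h
  exact h

lemma four_mul_mul_inv_eq_one_of_odd {q : ℕ} {a : ℤ} (hq : Odd q) (ha : IsCoprime a q) :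
    4 * (a : ZMod q) * ((4 * a : ℤ) : ZMod q)⁻¹ = 1 := by
  have h4 : IsCoprime (4 : ℤ) q := by
    simpa using Nat.isCoprime_iff_coprime.mpr ((Nat.coprime_two_left.mpr hq).pow_left 2)
  have := coe_int_mul_inv_eq_one (h4.mul_left ha)
  push_cast at this ⊢; exact this

section odd

variable {q : ℕ} [NeZero q]

lemma quadGaussSum_eq_of_four_mul_eq_one {a β : ZMod q} (hβ : 4 * a * β = 1) (k : ZMod q) :
    quadGaussSum q a k = stdAddChar (-(β * k ^ 2)) * quadGaussSum q a 0 := by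
  convert quadGaussSum_add_two_mul a 0 (2 * β * k) using 3
  · linear_combination (-k) * hβ
  · linear_combination (β * k ^ 2) * hβ

lemma quadGaussSum_zero_mul_conj_of_isUnit {a : ZMod q} (ha : IsUnit (2 * a)) :
    quadGaussSum q a 0 * starRingEnd ℂ (quadGaussSum q a 0) = q := by
  have hfilter : ({d | 2 * a * d = 0} : Finset (ZMod q)) = {0} := by
    ext d; simp [ha.mul_right_eq_zero]
  rw [quadGaussSum_mul_conj, hfilter, sum_singleton]
  simp

lemma conj_G_eq_cc_mul_of_odd {a : ℤ} (hq : Odd q) (ha : IsCoprime a q) (k : ℤ) :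
    starRingEnd ℂ (G a k q) = cc a q k * starRingEnd ℂ (G a 0 q) := by
  rw [G_eq_quadGaussSum, G_eq_quadGaussSum,
    quadGaussSum_eq_of_four_mul_eq_one (four_mul_mul_inv_eq_one_of_odd hq ha), map_mul,
    conj_stdAddChar, neg_neg, cc, if_pos hq, e_invMod_mul_div]
  push_cast; rfl

lemma norm_G_zero_of_odd {a : ℤ} (hq : Odd q) (ha : IsCoprime a q) : ‖G a 0 q‖ = √q := by
  have h2a : IsUnit (2 * (a : ZMod q)) := IsUnit.of_mul_eq_one (2 * ((4 * a : ℤ) : ZMod q)⁻¹)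
    (by linear_combination four_mul_mul_inv_eq_one_of_odd hq ha)
  refine norm_eq_sqrt_of_mul_conj_eq ?_
  rw [G_eq_quadGaussSum, Int.cast_zero, quadGaussSum_zero_mul_conj_of_isUnit h2a]
  rfl

end odd

lemma Int.odd_of_isCoprime_two_mul {a : ℤ} {r : ℕ} (ha : IsCoprime a (2 * r : ℕ)) :
    Odd a := by
  rw [← Int.not_even_iff_odd, even_iff_two_dvd]
  intro h2
  have := Int.isUnit_iff.mp (ha.isUnit_of_dvd' h2 ⟨r, by push_cast; ring⟩)
  omega

section even

variable {r : ℕ} [NeZero r]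

lemma ZMod.two_mul_eq_zero_iff (d : ZMod (2 * r)) : 2 * d = 0 ↔ d = 0 ∨ d = r := by
  refine ⟨fun h ↦ ?_, ?_⟩
  · obtain ⟨c, hc⟩ : 2 * r ∣ 2 * d.val := by
      rw [← natCast_eq_zero_iff]; push_cast [natCast_zmod_val]; exact h
    have hc2 : c < 2 := by nlinarith [d.val_lt]
    interval_cases c
    · left; rw [← natCast_zmod_val d]; simp_all
    · right; rw [← natCast_zmod_val d]; congr 1; omega
  · rintro (rfl | rfl)
    · simp
    · exact_mod_cast natCast_self (2 * r)

lemma quadGaussSum_mul_conj_of_even {a : ZMod (2 * r)} (ha : IsUnit a) (k : ZMod (2 * r)) :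
    quadGaussSum (2 * r) a k * starRingEnd ℂ (quadGaussSum (2 * r) a k) =
      (2 * r : ℕ) * (1 + stdAddChar ((r : ZMod (2 * r)) * (a * r + k) : ZMod (2 * r))) := by
  have hr : (0 : ZMod (2 * r)) ≠ r := by
    rw [ne_comm, Ne, natCast_eq_zero_iff]
    exact Nat.not_dvd_of_pos_of_lt (NeZero.pos r) (by have := NeZero.pos r; omega)
  have hfilter : ({d | 2 * a * d = 0} : Finset (ZMod (2 * r))) = {0, (r : ZMod (2 * r))} := by
    ext d
    rw [mem_filter, mul_comm 2 a, mul_assoc, ha.mul_right_eq_zero, two_mul_eq_zero_iff]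
    simp
  rw [quadGaussSum_mul_conj, hfilter, sum_pair hr]
  simp only [zero_pow two_ne_zero, mul_zero, add_zero, AddChar.map_zero_eq_one]
  ring_nf

variable {a : ℤ}

lemma G_mul_conj_of_even (ha : IsCoprime a (2 * r : ℕ)) (k : ℤ) :
    G a k (2 * r) * starRingEnd ℂ (G a k (2 * r)) =
      (2 * r : ℕ) * (1 + if Even (k + r) then 1 else -1) := by
  have hunit : IsUnit (a : ZMod (2 * r)) := (coe_int_isUnit_iff_isCoprime _ _).mpr ha.symm
  have hparity : Even (a * r + k) ↔ Even (k + r) := by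
    have := Int.not_even_iff_odd.mpr (Int.odd_of_isCoprime_two_mul ha)
    simp only [Int.even_add, Int.even_mul]; tauto
  have hcast : (r : ZMod (2 * r)) * (a * r + k) = r * ((a * r + k : ℤ) : ZMod (2 * r)) := by
    push_cast; rfl
  rw [G_eq_quadGaussSum, quadGaussSum_mul_conj_of_even hunit, hcast,
    stdAddChar_natCast_mul_intCast]
  simp only [hparity]

lemma G_eq_zero_of_even (ha : IsCoprime a (2 * r : ℕ)) {k : ℤ} (hk : ¬Even (k + r)) :
    G a k (2 * r) = 0 := by
  have h := G_mul_conj_of_even ha k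
  rw [if_neg hk, add_neg_cancel, mul_zero, Complex.mul_conj, Complex.ofReal_eq_zero] at h
  exact Complex.normSq_eq_zero.mp h

lemma norm_G_half_of_even (ha : IsCoprime a (2 * r : ℕ)) :
    ‖G a r (2 * r)‖ = √(2 * (2 * r : ℕ)) := by
  refine norm_eq_sqrt_of_mul_conj_eq ?_
  rw [G_mul_conj_of_even ha, if_pos (by simp)]
  push_cast; ring

lemma conj_G_eq_of_even (ha : IsCoprime a (2 * r : ℕ)) {k : ℤ} (hk : Even (k + r)) :
    starRingEnd ℂ (G a k (2 * r)) =
      e (invMod a (2 * r) * k ^ 2 / (4 * (2 * r : ℕ))) *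
        (e (-(invMod a (2 * r) * (r : ℤ) ^ 2 / (4 * (2 * r : ℕ)))) *
          starRingEnd ℂ (G a r (2 * r))) := by
  obtain ⟨w, hw⟩ : ∃ w, k = r + 2 * w := by
    obtain ⟨m, hm⟩ := hk; exact ⟨m - r, by linarith⟩
  set b := invMod a (2 * r) with hb
  obtain ⟨c, hc⟩ : ((2 * r : ℕ) : ℤ) ∣ a * (b : ℤ) - 1 := by
    rw [← intCast_zmod_eq_zero_iff_dvd]; push_cast
    rw [hb, invMod, coe_int_mul_val_inv ha, sub_self]
  have hshift :
      (k : ZMod (2 * r)) = ((r : ℤ) : ZMod (2 * r)) + 2 * a * ((b * w : ℤ) : ZMod (2 * r)) := by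
    have h : ((k : ℤ) : ZMod (2 * r)) = ((r + 2 * a * (b * w) : ℤ) : ZMod (2 * r)) :=
      (intCast_eq_intCast_iff_dvd_sub _ _ _).mpr
        ⟨2 * c * w, by linear_combination 2 * w * hc - hw⟩
    push_cast at h ⊢; exact h
  have hphase : ((a * (b * w) ^ 2 + r * (b * w) : ℤ) : ℝ) / (2 * r : ℕ) =
      b * k ^ 2 / (4 * (2 * r : ℕ)) + -(b * (r : ℤ) ^ 2 / (4 * (2 * r : ℕ))) +
        (c * b * w ^ 2 : ℤ) := by
    have hr : (r : ℝ) ≠ 0 := Nat.cast_ne_zero.mpr (NeZero.ne r)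
    have hc' : (a : ℝ) * b - 1 = 2 * r * c := by exact_mod_cast hc
    rw [hw]; push_cast; field_simp
    linear_combination (4 * b * w ^ 2) * hc'
  rw [G_eq_quadGaussSum, hshift, quadGaussSum_add_two_mul, map_mul, conj_stdAddChar, neg_neg,
    ← G_eq_quadGaussSum, ← mul_assoc, ← e_add, ← e_add_intCast _ (c * b * w ^ 2),
    ← hphase, e_intCast_div]
  push_cast; rfl

end even

lemma exists_conj_G_eq_cc_mul_of_odd {q : ℕ} [NeZero q] {a : ℤ} (hq : Odd q)
    (ha : IsCoprime a q) :
    ∃ w : ℂ, ‖w‖ = √q ∧ ∀ k, starRingEnd ℂ (G a k q) = cc a q k * w :=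
  ⟨_, by rw [Complex.norm_conj, norm_G_zero_of_odd hq ha], conj_G_eq_cc_mul_of_odd hq ha⟩

lemma exists_conj_G_eq_cc_mul_of_even {r : ℕ} [NeZero r] {a : ℤ}
    (ha : IsCoprime a (2 * r : ℕ)) :
    ∃ w : ℂ, ‖w‖ = √(2 * r : ℕ) ∧
      ∀ k, starRingEnd ℂ (G a k (2 * r)) = cc a (2 * r) k * w := by
  refine ⟨e (-(invMod a (2 * r) * (r : ℤ) ^ 2 / (4 * (2 * r : ℕ)))) *
    starRingEnd ℂ (G a r (2 * r)) / √2, ?_, fun k ↦ ?_⟩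
  · rw [norm_div, norm_mul, norm_e, Complex.norm_conj, norm_G_half_of_even ha,
      Real.sqrt_mul zero_le_two, Complex.norm_real, Real.norm_of_nonneg (Real.sqrt_nonneg 2)]
    field_simp
  · have hhalf : ((2 * r : ℕ) : ℤ) / 2 = r := by omega
    rw [cc, if_neg (Nat.not_odd_iff_even.mpr (even_two_mul r)), hhalf]
    by_cases hk : Even (k + r)
    · rw [if_pos hk, conj_G_eq_of_even ha hk]
      field_simp
    · rw [if_neg hk, G_eq_zero_of_even ha hk]
      simp

theorem stmt2 (a : ℤ) (q : ℕ) (hq : 0 < q) (hcop : Int.gcd a q = 1) :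
    ∃ α : ℝ, ∀ k : ℤ,
      (starRingEnd ℂ) (G a k q) =
        (Real.sqrt q : ℂ) * Complex.exp (Complex.I * α) * cc a q k := by
  have : NeZero q := ⟨hq.ne'⟩
  have ha : IsCoprime a q := Int.isCoprime_iff_gcd_eq_one.mpr hcop
  obtain ⟨w, hw, hG⟩ :
      ∃ w : ℂ, ‖w‖ = √q ∧ ∀ k, starRingEnd ℂ (G a k q) = cc a q k * w := by
    rcases Nat.even_or_odd q with hq2 | hq2
    · obtain ⟨r, rfl⟩ := even_iff_two_dvd.mp hq2
      have : NeZero r := ⟨by rintro rfl; simp at hq⟩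
      exact exists_conj_G_eq_cc_mul_of_even ha
    · exact exists_conj_G_eq_cc_mul_of_odd hq2 ha
  refine ⟨w.arg, fun k ↦ ?_⟩
  rw [hG, ← hw, mul_comm Complex.I, Complex.norm_mul_exp_arg_mul_I, mul_comm]
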